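/- Let X be a quandle, Y a hierarchical quandle over X, V_n the free K-module on Y^n × X^n, with l_n = Σ (-1)^{i+1} λ_{n,i} (where λ_{n,i} acts entries 1..i-1 by the hierarchical quandle operation with the i-th entry and deletes the i-th entry) and r_n = Σ (-1)^{i+1} ρ_{n,i} (where ρ_{n,i} deletes the i-th entry). Then l_{n-1} ∘ r_n + r_{n-1} ∘ l_n = 0 for all n ≥ 1. -/

import Mathlib

/-!
Write `λ_i`, `ρ_i` for the maps on generators (indices from `0`). They satisfy the mixed
relations `λ_i ρ_{a+1} = ρ_a λ_i` for `i ≤ a` and `λ_i ρ_a = ρ_a λ_{i+1}` for `a ≤ i`: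
deleting an entry and acting by an earlier entry commute.
Expanding `l ∘ r` and `r ∘ l` as alternating double sums, splitting the inner index at the outer
one and applying these relations turns every term of `l ∘ r` into a term of `r ∘ l` with the
opposite sign.
-/

namespace Stmt7

variable {X Y : Type*}

/-- The free `K`-module `V_n` on tuples in `Y^n × X^n`. -/
abbrev V (K : Type*) [CommRing K] (X Y : Type*) (n : ℕ) : Type _ :=
  ((Fin n → Y) × (Fin n → X)) →₀ K

/-- `λ_{n,i}` on generators: act on the entries before `i` by the `i`-th entry
and delete the `i`-th entry. -/
def lamTup (qop : X → X → X) (hop : X → X → Y → Y → Y) {n : ℕ} (i : Fin (n + 1))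
    (t : (Fin (n + 1) → Y) × (Fin (n + 1) → X)) : (Fin n → Y) × (Fin n → X) :=
  (fun j => if (j : ℕ) < (i : ℕ)
      then hop (t.2 j.castSucc) (t.2 i) (t.1 j.castSucc) (t.1 i)
      else t.1 j.succ,
   fun j => if (j : ℕ) < (i : ℕ) then qop (t.2 j.castSucc) (t.2 i) else t.2 j.succ)

/-- `ρ_{n,i}` on generators: delete the `i`-th entries of both tuples. -/
def rhoTup {n : ℕ} (i : Fin (n + 1))
    (t : (Fin (n + 1) → Y) × (Fin (n + 1) → X)) : (Fin n → Y) × (Fin n → X) :=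
  (fun j => t.1 (i.succAbove j), fun j => t.2 (i.succAbove j))

/-- The linear map `λ_{n,i} : V_{n+1} → V_n`. -/
noncomputable def lamMap (K : Type*) [CommRing K] (qop : X → X → X)
    (hop : X → X → Y → Y → Y) (n : ℕ) (i : Fin (n + 1)) :
    V K X Y (n + 1) →ₗ[K] V K X Y n :=
  Finsupp.lmapDomain K K (lamTup qop hop i)

/-- The linear map `ρ_{n,i} : V_{n+1} → V_n`. -/
noncomputable def rhoMap (K : Type*) [CommRing K] (n : ℕ) (i : Fin (n + 1)) :
    V K X Y (n + 1) →ₗ[K] V K X Y n :=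
  Finsupp.lmapDomain K K (rhoTup i)

/-- `l_n = Σ_i (-1)^{i+1} λ_{n,i}` (written with `0`-based indices). -/
noncomputable def lMap (K : Type*) [CommRing K] (qop : X → X → X)
    (hop : X → X → Y → Y → Y) (n : ℕ) : V K X Y (n + 1) →ₗ[K] V K X Y n :=
  ∑ i : Fin (n + 1), ((-1 : K) ^ (i : ℕ)) • lamMap K qop hop n i

/-- `r_n = Σ_i (-1)^{i+1} ρ_{n,i}` (written with `0`-based indices). -/
noncomputable def rMap (K : Type*) [CommRing K] (n : ℕ) :
    V K X Y (n + 1) →ₗ[K] V K X Y n :=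
  ∑ i : Fin (n + 1), ((-1 : K) ^ (i : ℕ)) • rhoMap (X := X) (Y := Y) K n i


end Stmt7

open Finset

theorem Fin.sum_univ_eq_sum_castSucc_add_sum_succ {M : Type*} [AddCommMonoid M] {n : ℕ}
    (p : Fin (n + 1)) (f : Fin (n + 2) → M) :
    ∑ j, f j = ∑ a with a ≤ p, f a.castSucc + ∑ a with p ≤ a, f a.succ := by
  have h_castSucc : ∑ a with a ≤ p, f a.castSucc = ∑ j with j ≤ p.castSucc, f j := by
    rw [sum_filter, sum_filter, Fin.sum_univ_castSucc _ (n := n + 1)]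
    simp
  have h_succ : ∑ a with p ≤ a, f a.succ = ∑ j with ¬ j ≤ p.castSucc, f j := by
    rw [sum_filter, sum_filter, Fin.sum_univ_succ _ (n := n + 1)]
    simp
  rw [h_castSucc, h_succ, sum_filter_add_sum_filter_not]

theorem Fin.sum_neg_one_pow_smul_eq {R M : Type*} [Ring R] [AddCommGroup M] [Module R M] {n : ℕ}
    (p : Fin (n + 1)) (f : Fin (n + 2) → M) :
    ∑ j : Fin (n + 2), (-1 : R) ^ (j : ℕ) • f j =
      ∑ a with a ≤ p, (-1 : R) ^ (a : ℕ) • f a.castSucc -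
        ∑ a with p ≤ a, (-1 : R) ^ (a : ℕ) • f a.succ := by
  simp [Fin.sum_univ_eq_sum_castSucc_add_sum_succ p, pow_succ, sub_eq_add_neg]

theorem Finset.sum_smul_sum_filter_comm {ι R M : Type*} [Fintype ι] [CommSemiring R]
    [AddCommMonoid M] [Module R M] (c : ι → R) (r : ι → ι → Prop) [DecidableRel r] (F : ι → ι → M) :
    ∑ i, c i • ∑ a with r a i, c a • F a i = ∑ a, c a • ∑ i with r a i, c i • F a i := by
  simp only [smul_sum]
  exact (sum_comm' (by simp)).trans
    (sum_congr rfl fun a _ => sum_congr rfl fun i _ => smul_comm _ _ _)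

theorem sum_neg_one_pow_smul_sum_add_eq_zero {R M : Type*} [CommRing R] [AddCommGroup M]
    [Module R M] {n : ℕ} (T U : Fin (n + 1) → Fin (n + 2) → M)
    (h_succ : ∀ i a, i ≤ a → T i a.succ = U a i.castSucc)
    (h_castSucc : ∀ i a, a ≤ i → T i a.castSucc = U a i.succ) :
    ∑ i : Fin (n + 1), (-1 : R) ^ (i : ℕ) • ∑ j : Fin (n + 2), (-1 : R) ^ (j : ℕ) • T i j +
      ∑ a : Fin (n + 1), (-1 : R) ^ (a : ℕ) • ∑ b : Fin (n + 2), (-1 : R) ^ (b : ℕ) • U a b =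
      0 := by
  have hT : ∀ i, ∑ j : Fin (n + 2), (-1 : R) ^ (j : ℕ) • T i j =
      ∑ a with a ≤ i, (-1 : R) ^ (a : ℕ) • U a i.succ -
        ∑ a with i ≤ a, (-1 : R) ^ (a : ℕ) • U a i.castSucc := by
    intro i
    rw [Fin.sum_neg_one_pow_smul_eq i]
    congr 1 <;> refine sum_congr rfl fun a ha => ?_ <;> rw [mem_filter] at ha
    · rw [h_castSucc i a ha.2]
    · rw [h_succ i a ha.2]
  have hU : ∀ a, ∑ b : Fin (n + 2), (-1 : R) ^ (b : ℕ) • U a b =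
      ∑ i with i ≤ a, (-1 : R) ^ (i : ℕ) • U a i.castSucc -
        ∑ i with a ≤ i, (-1 : R) ^ (i : ℕ) • U a i.succ :=
    fun a => Fin.sum_neg_one_pow_smul_eq a (U a)
  simp only [hT, hU, smul_sub, sum_sub_distrib]
  rw [sum_smul_sum_filter_comm (fun k : Fin (n + 1) => (-1 : R) ^ (k : ℕ)) (· ≤ ·)
      (fun a i => U a i.succ),
    sum_smul_sum_filter_comm (fun k : Fin (n + 1) => (-1 : R) ^ (k : ℕ)) (fun a i => i ≤ a)
      (fun a i => U a i.castSucc)]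
  abel

theorem LinearMap.alternating_comp_add_alternating_comp_eq_zero {R M₀ M₁ M₁' M₂ : Type*}
    [CommRing R] [AddCommGroup M₀] [AddCommGroup M₁] [AddCommGroup M₁'] [AddCommGroup M₂]
    [Module R M₀] [Module R M₁] [Module R M₁'] [Module R M₂] {n : ℕ}
    (f : Fin (n + 1) → M₁ →ₗ[R] M₀) (g : Fin (n + 2) → M₂ →ₗ[R] M₁)
    (f' : Fin (n + 1) → M₁' →ₗ[R] M₀) (g' : Fin (n + 2) → M₂ →ₗ[R] M₁')
    (h_succ : ∀ i a, i ≤ a → f i ∘ₗ g a.succ = f' a ∘ₗ g' i.castSucc)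
    (h_castSucc : ∀ i a, a ≤ i → f i ∘ₗ g a.castSucc = f' a ∘ₗ g' i.succ) :
    (∑ i : Fin (n + 1), (-1 : R) ^ (i : ℕ) • f i) ∘ₗ
        (∑ j : Fin (n + 2), (-1 : R) ^ (j : ℕ) • g j) +
      (∑ a : Fin (n + 1), (-1 : R) ^ (a : ℕ) • f' a) ∘ₗ
        (∑ b : Fin (n + 2), (-1 : R) ^ (b : ℕ) • g' b) = 0 := by
  ext x
  simp only [add_apply, comp_apply, coe_sum, Finset.sum_apply, smul_apply, zero_apply]
  simp only [map_sum, map_smul]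
  exact sum_neg_one_pow_smul_sum_add_eq_zero (R := R)
    (fun i j => f i (g j x)) (fun a b => f' a (g' b x))
    (fun i a h => LinearMap.congr_fun (h_succ i a h) x)
    (fun i a h => LinearMap.congr_fun (h_castSucc i a h) x)

theorem Fin.val_succAbove {n : ℕ} (p : Fin (n + 1)) (k : Fin n) :
    (p.succAbove k : ℕ) = if (k : ℕ) < p then (k : ℕ) else k + 1 := by
  simp only [Fin.succAbove, Fin.lt_def, apply_ite Fin.val, Fin.val_castSucc, Fin.val_succ]

namespace Stmt7

variable {X Y : Type*}

theorem lamTup_comp_rhoTup_succ (qop : X → X → X) (hop : X → X → Y → Y → Y) {n : ℕ}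
    {i a : Fin (n + 1)} (h : i ≤ a) :
    lamTup qop hop i ∘ rhoTup a.succ = rhoTup a ∘ lamTup qop hop i.castSucc := by
  rw [Fin.le_def] at h
  funext t
  ext k <;>
    simp only [lamTup, rhoTup, Function.comp_apply, Fin.val_succAbove, Fin.val_castSucc] <;>
    split_ifs <;> (try omega) <;> (try congr 1) <;> apply congrArg <;> ext <;>
    simp only [Fin.val_succAbove, Fin.val_succ, Fin.val_castSucc] <;> split_ifs <;> omega

theorem lamTup_comp_rhoTup_castSucc (qop : X → X → X) (hop : X → X → Y → Y → Y) {n : ℕ}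
    {i a : Fin (n + 1)} (h : a ≤ i) :
    lamTup qop hop i ∘ rhoTup a.castSucc = rhoTup a ∘ lamTup qop hop i.succ := by
  rw [Fin.le_def] at h
  funext t
  ext k <;>
    simp only [lamTup, rhoTup, Function.comp_apply, Fin.val_succAbove, Fin.val_succ] <;>
    split_ifs <;> (try omega) <;> (try congr 1) <;> apply congrArg <;> ext <;>
    simp only [Fin.val_succAbove, Fin.val_succ, Fin.val_castSucc] <;> split_ifs <;> omega

theorem lamMap_comp_rhoMap_succ (K : Type*) [CommRing K] (qop : X → X → X)
    (hop : X → X → Y → Y → Y) {n : ℕ} {i a : Fin (n + 1)} (h : i ≤ a) :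
    lamMap K qop hop n i ∘ₗ rhoMap K (n + 1) a.succ =
      rhoMap K n a ∘ₗ lamMap K qop hop (n + 1) i.castSucc := by
  simp only [lamMap, rhoMap, ← Finsupp.lmapDomain_comp, lamTup_comp_rhoTup_succ qop hop h]

theorem lamMap_comp_rhoMap_castSucc (K : Type*) [CommRing K] (qop : X → X → X)
    (hop : X → X → Y → Y → Y) {n : ℕ} {i a : Fin (n + 1)} (h : a ≤ i) :
    lamMap K qop hop n i ∘ₗ rhoMap K (n + 1) a.castSucc =
      rhoMap K n a ∘ₗ lamMap K qop hop (n + 1) i.succ := by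
  simp only [lamMap, rhoMap, ← Finsupp.lmapDomain_comp, lamTup_comp_rhoTup_castSucc qop hop h]

theorem l_r_anticommute_general (K : Type*) [CommRing K] (qop : X → X → X) (hop : X → X → Y → Y → Y)
    (n : ℕ) :
    (lMap K qop hop n).comp (rMap K (n + 1)) +
      (rMap K n).comp (lMap K qop hop (n + 1)) = 0 :=
  LinearMap.alternating_comp_add_alternating_comp_eq_zero _ _ _ _
    (fun _ _ => lamMap_comp_rhoMap_succ K qop hop)
    (fun _ _ => lamMap_comp_rhoMap_castSucc K qop hop)

/-- `l_{n-1} ∘ r_n + r_{n-1} ∘ l_n = 0` for all `n ≥ 1`. -/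
theorem l_r_anticommute (K : Type*) [CommRing K] (qop : X → X → X) (hop : X → X → Y → Y → Y)
    (qidem : ∀ x, qop x x = x)
    (qbij : ∀ a, Function.Bijective fun x => qop x a)
    (qdistrib : ∀ x1 x2 x3, qop (qop x1 x2) x3 = qop (qop x1 x3) (qop x2 x3))
    (hidem : ∀ x y, hop x x y y = y)
    (hbij : ∀ x1 x2 (a : Y), Function.Bijective fun y => hop x1 x2 y a)
    (hdistrib : ∀ x1 x2 x3 (y1 y2 y3 : Y),
      hop (qop x1 x2) x3 (hop x1 x2 y1 y2) y3 =
        hop (qop x1 x3) (qop x2 x3) (hop x1 x3 y1 y3) (hop x2 x3 y2 y3))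
    (n : ℕ) :
    (lMap K qop hop n).comp (rMap K (n + 1)) +
      (rMap K n).comp (lMap K qop hop (n + 1)) = 0 :=
  l_r_anticommute_general K qop hop n

end Stmt7
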